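/- arXiv:0910.3759 — 2 statements merged into one kernel-verified Lean document; each statement's English description precedes it below -/
import Mathlib

section
/- Let A be a henselian discrete valuation ring with fraction field K and algebraically closed residue field, let L/K be a finite separable field extension, and let B be the integral closure of A in L; assume B is a discrete valuation ring. Then for every x ∈ L^×, the normalized valuations satisfy v_B(x) = v_A(N_{L/K}(x)), where N_{L/K} : L^× → K^× is the field norm. -/
open Multiplicative IsLocalRing

local notation "ZM0" => WithZero (Multiplicative ℤ)



/-- If `r` is a unit of `R` then its image in `F` has valuation `1`,
for a valuation whose ring of integers is (the image of) `R`. -/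
private lemma aux_val_unit {R F : Type*} [CommRing R] [Field F] [Algebra R F]
    (v : Valuation F ZM0)
    (hint : ∀ x : F, v x ≤ 1 ↔ ∃ r : R, algebraMap R F r = x)
    {r : R} (hr : IsUnit r) : v (algebraMap R F r) = 1 := by
  obtain ⟨u, rfl⟩ := hr
  have h1 : v (algebraMap R F u.val) ≤ 1 := (hint _).2 ⟨_, rfl⟩
  have h2 : v (algebraMap R F u.inv) ≤ 1 := (hint _).2 ⟨_, rfl⟩
  have hm : v (algebraMap R F u.val) * v (algebraMap R F u.inv) = 1 := by
    rw [← Valuation.map_mul, ← map_mul, u.val_inv, map_one, map_one]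
  refine le_antisymm h1 ?_
  have := mul_le_mul_right h2 (v (algebraMap R F u.val))
  rwa [hm, mul_one] at this

private lemma aux_unit_of_val {R F : Type*} [CommRing R] [Field F] [Algebra R F]
    (v : Valuation F ZM0)
    (hint : ∀ x : F, v x ≤ 1 ↔ ∃ r : R, algebraMap R F r = x)
    (hinj : Function.Injective (algebraMap R F))
    {r : R} (h1 : v (algebraMap R F r) = 1) : IsUnit r := by
  have hr0 : algebraMap R F r ≠ 0 := by
    intro h; rw [h, map_zero] at h1; exact zero_ne_one h1
  have hinv : v (algebraMap R F r)⁻¹ ≤ 1 := by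
    rw [map_inv₀, h1, inv_one]
  obtain ⟨s, hs⟩ := (hint _).1 hinv
  have : r * s = 1 := by
    apply hinj
    rw [map_mul, hs, map_one, mul_inv_cancel₀ hr0]
  exact IsUnit.of_mul_eq_one _ this

/-- An irreducible element of the DVR of integers of a surjective `ZM0`-valued
valuation has value `ofAdd (-1)`. -/
private lemma aux_val_irreducible {R F : Type*} [CommRing R] [IsDomain R]
    [IsDiscreteValuationRing R] [Field F] [Algebra R F]
    (v : Valuation F ZM0) (hsurj : Function.Surjective v)
    (hint : ∀ x : F, v x ≤ 1 ↔ ∃ r : R, algebraMap R F r = x)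
    (hinj : Function.Injective (algebraMap R F))
    {ϖ : R} (hϖ : Irreducible ϖ) :
    v (algebraMap R F ϖ) = ((ofAdd (-1 : ℤ) : Multiplicative ℤ) : ZM0) := by
  have hϖ0 : algebraMap R F ϖ ≠ 0 := fun h =>
    hϖ.ne_zero (hinj (by rw [h, map_zero]))
  obtain ⟨g, hg⟩ : ∃ g : Multiplicative ℤ, v (algebraMap R F ϖ) = g := by
    rcases WithZero.ne_zero_iff_exists.mp (v.ne_zero_iff.mpr hϖ0) with ⟨g, hg⟩
    exact ⟨g, hg.symm⟩
  have hgle : g ≤ 1 := by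
    have := (hint _).2 ⟨ϖ, rfl⟩
    rw [hg] at this
    exact_mod_cast this
  have hgne : g ≠ 1 := by
    intro h
    exact hϖ.not_isUnit (aux_unit_of_val v hint hinj (by rw [hg, h, WithZero.coe_one]))
  obtain ⟨y, hy⟩ := hsurj ((ofAdd (-1 : ℤ) : Multiplicative ℤ) : ZM0)
  have hy1 : v y ≤ 1 := by
    rw [hy]
    exact_mod_cast le_of_lt (by exact_mod_cast (by norm_num : (-1 : ℤ) < 0) : (ofAdd (-1:ℤ) : Multiplicative ℤ) < 1)
  obtain ⟨c, hc⟩ := (hint _).1 hy1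
  have hc0 : c ≠ 0 := by
    rintro rfl
    rw [map_zero] at hc
    rw [← hc, map_zero] at hy
    exact (WithZero.coe_ne_zero (a := (ofAdd (-1:ℤ)))) hy.symm
  obtain ⟨m, u, hcu⟩ := IsDiscreteValuationRing.eq_unit_mul_pow_irreducible hc0 hϖ
  have hkey : ((ofAdd (-1:ℤ) : Multiplicative ℤ) : ZM0) = ((g ^ m : Multiplicative ℤ) : ZM0) := by
    rw [← hy, ← hc, hcu, map_mul, map_mul, map_pow, aux_val_unit v hint u.isUnit, one_mul,
      Valuation.map_pow, hg, ← WithZero.coe_pow]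
  have hkey' : (ofAdd (-1:ℤ)) = g ^ m := WithZero.coe_inj.mp hkey
  have htoadd : (-1 : ℤ) = m • (g.toAdd) := by
    have := congrArg Multiplicative.toAdd hkey'
    simpa using this
  have hdvd : g.toAdd ∣ -1 := ⟨m, by rw [htoadd]; push_cast [nsmul_eq_mul]; ring⟩
  have hneg : g.toAdd < 0 := by
    rcases lt_or_eq_of_le hgle with h | h
    · exact_mod_cast h
    · exact absurd h hgne
  have : g.toAdd = -1 := by
    have := Int.isUnit_iff.mp (isUnit_of_dvd_unit hdvd (by norm_num))
    omega
  rw [hg, show g = ofAdd (-1 : ℤ) from by rw [← ofAdd_toAdd g, this]]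

/-- Let `A` be a henselian discrete valuation ring with fraction field `K` and
algebraically closed residue field, `L/K` a finite separable extension and `B`
the integral closure of `A` in `L`, assumed to be a discrete valuation ring.
Then the normalized valuations (formalized as surjective `ℤₘ₀`-valued valuations
whose valuation rings are `A` resp. `B`) satisfy
`v_B(x) = v_A(N_{L/K}(x))` for all `x ∈ Lˣ`. -/
theorem valuation_norm_eq_of_henselian
    (A : Type*) [CommRing A] [IsDomain A] [IsDiscreteValuationRing A] [HenselianLocalRing A]
    [IsAlgClosed (IsLocalRing.ResidueField A)]
    (K : Type*) [Field K] [Algebra A K] [IsFractionRing A K]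
    (L : Type*) [Field L] [Algebra K L] [FiniteDimensional K L] [Algebra.IsSeparable K L]
    (B : Type*) [CommRing B] [IsDomain B] [IsDiscreteValuationRing B]
    [Algebra A B] [Algebra B L] [Algebra A L] [IsScalarTower A B L] [IsScalarTower A K L]
    (hB : IsIntegralClosure B A L)
    (vA : Valuation K (WithZero (Multiplicative ℤ)))
    (vB : Valuation L (WithZero (Multiplicative ℤ)))
    (hvAsurj : Function.Surjective vA)
    (hvBsurj : Function.Surjective vB)
    (hvAint : ∀ x : K, vA x ≤ 1 ↔ ∃ a : A, algebraMap A K a = x)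
    (hvBint : ∀ y : L, vB y ≤ 1 ↔ ∃ b : B, algebraMap B L b = y)
    (x : L) (hx : x ≠ 0) :
    vB x = vA (Algebra.norm K x) := by
  classical
  have hinjAK : Function.Injective (algebraMap A K) := IsFractionRing.injective A K
  have hinjBL : Function.Injective (algebraMap B L) :=
    IsIntegralClosure.algebraMap_injective B A L
  haveI : IsFractionRing B L := IsIntegralClosure.isFractionRing_of_finite_extension A K L B
  haveI : Module.Finite A B := IsIntegralClosure.finite A K L B
  have hinjAB : Function.Injective (algebraMap A B) := by
    intro a b h
    apply hinjAK
    apply (algebraMap K L).injective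
    rw [← IsScalarTower.algebraMap_apply A K L, ← IsScalarTower.algebraMap_apply A K L,
      IsScalarTower.algebraMap_apply A B L, IsScalarTower.algebraMap_apply A B L, h]
  set n := Module.finrank K L with hn
  have hn0 : 0 < n := Module.finrank_pos
  obtain ⟨ϖ, hϖ⟩ := IsDiscreteValuationRing.exists_irreducible B
  obtain ⟨π, hπ⟩ := IsDiscreteValuationRing.exists_irreducible A
  -- norms of elements of B lie in A
  have hnormA : ∀ b : B, ∃ a : A, algebraMap A K a = Algebra.norm K (algebraMap B L b) := by
    intro b
    have hbint : IsIntegral A (algebraMap B L b) := (IsIntegralClosure.isIntegral A L b).algebraMap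
    exact IsIntegrallyClosed.isIntegral_iff.mp (Algebra.isIntegral_norm K hbint)
  have hnormA_le : ∀ b : B, vA (Algebra.norm K (algebraMap B L b)) ≤ 1 := by
    intro b
    obtain ⟨a, ha⟩ := hnormA b
    rw [← ha]
    exact (hvAint _).2 ⟨a, rfl⟩
  have hnorm_unit : ∀ b : B, IsUnit b → vA (Algebra.norm K (algebraMap B L b)) = 1 := by
    rintro _ ⟨u, rfl⟩
    have h1 := hnormA_le u.val
    have h2 := hnormA_le u.inv
    have hm : vA (Algebra.norm K (algebraMap B L u.val)) *
        vA (Algebra.norm K (algebraMap B L u.inv)) = 1 := by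
      rw [← Valuation.map_mul, ← map_mul, ← map_mul, u.val_inv, map_one, map_one, map_one]
    refine le_antisymm h1 ?_
    have := mul_le_mul_right h2 (vA (Algebra.norm K (algebraMap B L u.val)))
    rwa [hm, mul_one] at this
  have hvBϖ : vB (algebraMap B L ϖ) = ((ofAdd (-1 : ℤ) : Multiplicative ℤ) : ZM0) :=
    aux_val_irreducible vB hvBsurj hvBint hinjBL hϖ
  have hvAπ : vA (algebraMap A K π) = ((ofAdd (-1 : ℤ) : Multiplicative ℤ) : ZM0) :=
    aux_val_irreducible vA hvAsurj hvAint hinjAK hπ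
  -- π is a nonzero nonunit of B
  have hπB0 : algebraMap A B π ≠ 0 := fun h => hπ.ne_zero (hinjAB (by rw [h, map_zero]))
  have hπB_nu : ¬IsUnit (algebraMap A B π) := by
    intro h
    obtain ⟨u, hu⟩ := h
    have hπK0 : algebraMap A K π ≠ 0 := fun h => hπ.ne_zero (hinjAK (by rw [h, map_zero]))
    have ht : algebraMap B L u.inv = algebraMap K L (algebraMap A K π)⁻¹ := by
      have h1 : algebraMap B L u.val * algebraMap B L u.inv = 1 := by
        rw [← map_mul, u.val_inv, map_one]
      rw [hu] at h1
      rw [← IsScalarTower.algebraMap_apply A B L, IsScalarTower.algebraMap_apply A K L] at h1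
      rw [map_inv₀]
      exact eq_inv_of_mul_eq_one_right h1
    have hint : IsIntegral A ((algebraMap A K π)⁻¹) := by
      refine IsIntegral.tower_bot (algebraMap K L).injective ?_
      rw [← ht]
      exact (IsIntegralClosure.isIntegral A L u.inv).algebraMap
    obtain ⟨a, ha⟩ := IsIntegrallyClosed.isIntegral_iff.mp hint
    have : π * a = 1 := by
      apply hinjAK
      rw [map_mul, ha, map_one, mul_inv_cancel₀ hπK0]
    exact hπ.not_isUnit (IsUnit.of_mul_eq_one _ this)
  obtain ⟨e, u, hue⟩ := IsDiscreteValuationRing.eq_unit_mul_pow_irreducible hπB0 hϖ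
  -- ramification theory: e = n
  haveI hLO : (maximalIdeal B).LiesOver (maximalIdeal A) := by
    constructor
    have : (Ideal.comap (algebraMap A B) (maximalIdeal B)).IsMaximal :=
      Ideal.isMaximal_comap_of_isIntegral_of_isMaximal (maximalIdeal B)
    exact (IsLocalRing.eq_maximalIdeal this).symm
  -- the residue extension is trivial
  have hressurj : ∀ y : B ⧸ maximalIdeal B,
      ∃ a : A, Ideal.Quotient.mk (maximalIdeal B) (algebraMap A B a) = y := by
    have hle : maximalIdeal A ≤ Ideal.comap (algebraMap A B) (maximalIdeal B) :=
      le_of_eq hLO.over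
    let φ : ResidueField A →+* B ⧸ maximalIdeal B :=
      Ideal.Quotient.lift (maximalIdeal A)
        ((Ideal.Quotient.mk (maximalIdeal B)).comp (algebraMap A B))
        (fun a ha => by
          have h2 : algebraMap A B a ∈ maximalIdeal B := hle ha
          rw [RingHom.comp_apply, Ideal.Quotient.eq_zero_iff_mem]
          exact h2)
    letI : Algebra (ResidueField A) (B ⧸ maximalIdeal B) := φ.toAlgebra
    haveI : (maximalIdeal B).IsMaximal := IsLocalRing.maximalIdeal.isMaximal B
    haveI : Algebra.IsIntegral (ResidueField A) (B ⧸ maximalIdeal B) := by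
      constructor
      intro y
      obtain ⟨b, rfl⟩ := Ideal.Quotient.mk_surjective y
      obtain ⟨p, hpm, hpe⟩ := Algebra.IsIntegral.isIntegral (R := A) b
      refine ⟨p.map (residue A), hpm.map _, ?_⟩
      have hcomp : φ.comp (residue A) =
          (Ideal.Quotient.mk (maximalIdeal B)).comp (algebraMap A B) := by
        ext a
        rfl
      show Polynomial.eval₂ (algebraMap (ResidueField A) (B ⧸ maximalIdeal B)) _ _ = 0
      rw [show algebraMap (ResidueField A) (B ⧸ maximalIdeal B) = φ from rfl,
        Polynomial.eval₂_map, hcomp, ← Polynomial.hom_eval₂, hpe, map_zero]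
    have hsurj := (IsAlgClosed.algebraMap_bijective_of_isIntegral
      (k := ResidueField A) (K := B ⧸ maximalIdeal B)).2
    intro y
    obtain ⟨r, hr⟩ := hsurj y
    obtain ⟨a, rfl⟩ := Ideal.Quotient.mk_surjective r
    exact ⟨a, hr⟩
  have hf : Ideal.inertiaDeg' (maximalIdeal A) (maximalIdeal B) = 1 := by
    rw [Ideal.inertiaDeg'_algebraMap]
    have hbij : Function.Bijective
        (algebraMap (A ⧸ maximalIdeal A) (B ⧸ maximalIdeal B)) := by
      constructor
      · exact Ideal.quotientMap_injective' (le_of_eq hLO.over.symm)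
      · intro y
        obtain ⟨a, ha⟩ := hressurj y
        exact ⟨Ideal.Quotient.mk (maximalIdeal A) a, ha⟩
    let eqv : (A ⧸ maximalIdeal A) ≃ₗ[A ⧸ maximalIdeal A] (B ⧸ maximalIdeal B) :=
      LinearEquiv.ofBijective (Algebra.linearMap _ _) hbij
    rw [← eqv.finrank_eq, Module.finrank_self]
  have he0 : e ≠ 0 := by
    rintro rfl
    rw [pow_zero, mul_one] at hue
    exact hπB_nu (hue ▸ u.isUnit)
  have hmapeq : Ideal.map (algebraMap A B) (maximalIdeal A) = Ideal.span {ϖ ^ e} := by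
    rw [hπ.maximalIdeal_eq, Ideal.map_span, Set.image_singleton]
    refine Ideal.span_singleton_eq_span_singleton.mpr ⟨u⁻¹, ?_⟩
    rw [hue, mul_comm (u : B), mul_assoc, u.mul_inv, mul_one]
  have he : Ideal.ramificationIdx' (maximalIdeal A) (maximalIdeal B) = e := by
    refine Ideal.ramificationIdx'_spec ?_ ?_
    · rw [hmapeq, hϖ.maximalIdeal_eq, Ideal.span_singleton_pow]
    · rw [hmapeq, hϖ.maximalIdeal_eq, Ideal.span_singleton_pow]
      intro hcon
      have hdvd := Ideal.span_singleton_le_span_singleton.mp hcon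
      have := (pow_dvd_pow_iff hϖ.ne_zero hϖ.not_isUnit).mp hdvd
      omega
  have hen : e = n := by
    have hInebot : Ideal.map (algebraMap A B) (maximalIdeal A) ≠ ⊥ := by
      rw [hmapeq, ne_eq, Ideal.span_singleton_eq_bot]
      exact pow_ne_zero _ hϖ.ne_zero
    have hInetop : Ideal.map (algebraMap A B) (maximalIdeal A) ≠ ⊤ := by
      rw [hmapeq, ne_eq, Ideal.span_singleton_eq_top]
      intro hunit
      exact hϖ.not_isUnit ((isUnit_pow_iff he0).mp hunit)
    have hfacmem : ∀ q ∈ UniqueFactorizationMonoid.factors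
        (Ideal.map (algebraMap A B) (maximalIdeal A)), q = maximalIdeal B := by
      intro q hq
      have hqprime := UniqueFactorizationMonoid.prime_of_factor q hq
      haveI hqp : q.IsPrime := Ideal.isPrime_of_prime hqprime
      exact IsLocalRing.eq_maximalIdeal
        (Ring.DimensionLEOne.maximalOfPrime hqprime.ne_zero hqp)
    have hfacne : UniqueFactorizationMonoid.factors
        (Ideal.map (algebraMap A B) (maximalIdeal A)) ≠ 0 := by
      intro hzero
      have hassoc := UniqueFactorizationMonoid.factors_prod hInebot
      rw [hzero, Multiset.prod_zero] at hassoc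
      exact hInetop (Ideal.isUnit_iff.mp (associated_one_iff_isUnit.mp hassoc.symm))
    have hsum := Ideal.sum_ramification_inertia (R := A) (S := B) (p := maximalIdeal A) K L
      (IsDiscreteValuationRing.not_a_field A)
    rw [hn, ← hsum]
    exact ((Finset.sum_eq_single_of_mem (maximalIdeal B)
        ((@Multiset.mem_toFinset _ (fun a b => Classical.propDecidable (a = b)) _ _).mpr (by
          obtain ⟨q', hq'⟩ := Multiset.exists_mem_of_ne_zero hfacne
          rwa [hfacmem q' hq'] at hq'))
        (fun b hb hne => absurd (hfacmem b
          ((@Multiset.mem_toFinset _ (fun a b => Classical.propDecidable (a = b)) _ _).mp hb)) hne)).trans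
      (by rw [he, hf, mul_one])).symm
    
  -- the crux : the norm of ϖ has value ofAdd (-1)
  have hcrux : vA (Algebra.norm K (algebraMap B L ϖ)) =
      ((ofAdd (-1 : ℤ) : Multiplicative ℤ) : ZM0) := by
    have hπL : algebraMap B L (algebraMap A B π) = algebraMap K L (algebraMap A K π) := by
      rw [← IsScalarTower.algebraMap_apply A B L, IsScalarTower.algebraMap_apply A K L]
    have hnπ : vA (Algebra.norm K (algebraMap B L (algebraMap A B π)))
        = ((ofAdd (-(n : ℤ)) : Multiplicative ℤ) : ZM0) := by
      rw [hπL, Algebra.norm_algebraMap, Valuation.map_pow, hvAπ, ← WithZero.coe_pow]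
      congr 1
      rw [← ofAdd_nsmul]
      congr 1
      simp [hn]
    have hϖL0 : algebraMap B L ϖ ≠ 0 := fun h => hϖ.ne_zero (hinjBL (by rw [h, map_zero]))
    have hnorm0 : Algebra.norm K (algebraMap B L ϖ) ≠ 0 := Algebra.norm_ne_zero_iff.mpr hϖL0
    obtain ⟨g, hg⟩ : ∃ g : Multiplicative ℤ, vA (Algebra.norm K (algebraMap B L ϖ)) = g := by
      rcases WithZero.ne_zero_iff_exists.mp (vA.ne_zero_iff.mpr hnorm0) with ⟨g, hg⟩
      exact ⟨g, hg.symm⟩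
    have hge : vA (Algebra.norm K (algebraMap B L (algebraMap A B π))) = (g : ZM0) ^ e := by
      rw [hue, map_mul, map_pow, map_mul, map_pow, Valuation.map_mul, Valuation.map_pow,
        hnorm_unit u u.isUnit, one_mul, hg]
    have heq : ((ofAdd (-(n : ℤ)) : Multiplicative ℤ) : ZM0) = ((g ^ e : Multiplicative ℤ) : ZM0) := by
      rw [← hnπ, hge, WithZero.coe_pow]
    have htoadd : -(n : ℤ) = (e : ℤ) * g.toAdd := by
      have := congrArg Multiplicative.toAdd (WithZero.coe_inj.mp heq)
      simpa [nsmul_eq_mul] using this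
    have hgval : g.toAdd = -1 := by
      rw [hen] at htoadd
      have hne : (n : ℤ) ≠ 0 := Int.natCast_ne_zero.mpr hn0.ne'
      have : (n : ℤ) * g.toAdd = (n : ℤ) * (-1) := by omega
      exact mul_left_cancel₀ hne this
    rw [hg, show g = ofAdd (-1 : ℤ) from by rw [← ofAdd_toAdd g, hgval]]
  -- elements of B
  have key : ∀ b : B, b ≠ 0 →
      vB (algebraMap B L b) = vA (Algebra.norm K (algebraMap B L b)) := by
    intro b hb
    obtain ⟨m, w, rfl⟩ := IsDiscreteValuationRing.eq_unit_mul_pow_irreducible hb hϖ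
    rw [map_mul, map_pow, Valuation.map_mul, Valuation.map_pow,
      aux_val_unit vB hvBint w.isUnit, one_mul, hvBϖ,
      map_mul, map_pow, Valuation.map_mul, Valuation.map_pow,
      hnorm_unit w w.isUnit, one_mul, hcrux]
  -- general elements of L
  obtain ⟨a, s, hs, hdiv⟩ := IsFractionRing.div_surjective (A := B) x
  have hs0 : s ≠ 0 := nonZeroDivisors.ne_zero hs
  have hsL : algebraMap B L s ≠ 0 := fun h => hs0 (hinjBL (by rw [h, map_zero]))
  have ha : algebraMap B L a = x * algebraMap B L s := by
    rw [← hdiv, div_mul_cancel₀ _ hsL]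
  have ha0 : a ≠ 0 := by
    intro h
    rw [h, map_zero] at ha
    exact hx (by
      rcases mul_eq_zero.mp ha.symm with h | h
      · exact h
      · exact absurd h hsL)
  have h1 := key a ha0
  have h2 := key s hs0
  rw [ha, Valuation.map_mul, map_mul, Valuation.map_mul] at h1
  rw [h2] at h1
  have hvs : vA (Algebra.norm K (algebraMap B L s)) ≠ 0 := by
    rw [← h2]
    exact vB.ne_zero_iff.mpr hsL
  exact mul_right_cancel₀ hvs h1
end

section
/- Let K be a field and n a positive integer invertible in K. Then the Kummer sequence induces a natural isomorphism K^×/(K^×)^n ≅ H^1(Gal(K_sep/K), μ_n(K_sep)), where μ_n(K_sep) is the group of n-th roots of unity in a separable closure K_sep with its natural Galois action. -/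
/-! Kummer theory: for a field `K` and `n` invertible in `K`, the Kummer
sequence induces a natural isomorphism
`K^×/(K^×)ⁿ ≅ H¹(Gal(K_sep/K), μ_n(K_sep))`.

Here the Galois cohomology group `H¹` is realized concretely as continuous
(i.e. locally constant, for the Krull topology on the absolute Galois group)
`1`-cocycles with values in the `n`-th roots of unity of a separable closure,
modulo `1`-coboundaries, and the isomorphism is the one induced by the Kummer
sequence: a class of `a ∈ K^×` is sent to the class of the cocycle
`g ↦ g(α)/α` for any `α` with `αⁿ = a`. -/

variable (K Ksep : Type*) [Field K] [Field Ksep] [Algebra K Ksep] (n : ℕ)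

/-- Continuous `1`-cocycles of the absolute Galois group `Gal(Ksep/K)` with
values in `μ_n(Ksep)`: maps `f` with `f(g) ∈ μ_n`, satisfying the cocycle rule
`f(gh) = f(g) · g(f(h))`, and locally constant for the Krull topology. -/
def kummerCocycles : Subgroup ((Ksep ≃ₐ[K] Ksep) → Ksepˣ) where
  carrier := {f | (∀ g, f g ^ n = 1) ∧
    (∀ g h : Ksep ≃ₐ[K] Ksep, ((f (g * h) : Ksep)) = (f g : Ksep) * g ((f h : Ksep))) ∧
    IsLocallyConstant f}
  one_mem' :=
    ⟨fun g => one_pow n, fun g h => by simp, IsLocallyConstant.const 1⟩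
  mul_mem' := by
    rintro a b ⟨ha1, ha2, ha3⟩ ⟨hb1, hb2, hb3⟩
    refine ⟨fun g => by rw [Pi.mul_apply, mul_pow, ha1 g, hb1 g, one_mul],
      fun g h => ?_, ha3.mul hb3⟩
    simp only [Pi.mul_apply, Units.val_mul, ha2 g h, hb2 g h, map_mul]
    ring
  inv_mem' := by
    rintro a ⟨ha1, ha2, ha3⟩
    refine ⟨fun g => by rw [Pi.inv_apply, inv_pow, ha1 g, inv_one],
      fun g h => ?_, ha3.inv⟩
    simp only [Pi.inv_apply, Units.val_inv_eq_inv_val, ha2 g h, mul_inv, map_inv₀]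

/-- `1`-coboundaries with values in `μ_n(Ksep)`: maps of the form
`g ↦ g(ζ)/ζ` with `ζ ∈ μ_n(Ksep)`. -/
def kummerCoboundaries : Subgroup ((Ksep ≃ₐ[K] Ksep) → Ksepˣ) where
  carrier := {f | ∃ ζ : Ksepˣ, ζ ^ n = 1 ∧
    ∀ g : Ksep ≃ₐ[K] Ksep, ((f g : Ksep)) = g ((ζ : Ksep)) / (ζ : Ksep)}
  one_mem' := ⟨1, one_pow n, fun g => by simp⟩
  mul_mem' := by
    rintro a b ⟨ζ, hζ, hab⟩ ⟨ξ, hξ, hbb⟩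
    refine ⟨ζ * ξ, by rw [mul_pow, hζ, hξ, one_mul], fun g => ?_⟩
    simp only [Pi.mul_apply, Units.val_mul, hab g, hbb g, map_mul]
    field_simp
  inv_mem' := by
    rintro a ⟨ζ, hζ, ha⟩
    refine ⟨ζ⁻¹, by rw [inv_pow, hζ, inv_one], fun g => ?_⟩
    simp only [Pi.inv_apply, Units.val_inv_eq_inv_val, ha g, map_inv₀]
    simp [div_eq_mul_inv, mul_comm]

/-- The first (continuous) Galois cohomology group `H¹(Gal(Ksep/K), μ_n)`:
continuous cocycles modulo coboundaries. -/
def kummerH1 :=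
  kummerCocycles K Ksep n ⧸
    ((kummerCoboundaries K Ksep n).subgroupOf (kummerCocycles K Ksep n))

instance : CommGroup (kummerH1 K Ksep n) :=
  inferInstanceAs (CommGroup (kummerCocycles K Ksep n ⧸
    ((kummerCoboundaries K Ksep n).subgroupOf (kummerCocycles K Ksep n))))

section KummerAux

open IntermediateField

variable {K Ksep : Type*} [Field K] [Field Ksep] [Algebra K Ksep] {n : ℕ}

theorem mem_kummerCocycles (f : (Ksep ≃ₐ[K] Ksep) → Ksepˣ) :
    f ∈ kummerCocycles K Ksep n ↔ (∀ g, f g ^ n = 1) ∧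
    (∀ g h : Ksep ≃ₐ[K] Ksep, ((f (g * h) : Ksep)) = (f g : Ksep) * g ((f h : Ksep))) ∧
    IsLocallyConstant f := Iff.rfl

theorem mem_kummerCoboundaries (f : (Ksep ≃ₐ[K] Ksep) → Ksepˣ) :
    f ∈ kummerCoboundaries K Ksep n ↔ ∃ ζ : Ksepˣ, ζ ^ n = 1 ∧
    ∀ g : Ksep ≃ₐ[K] Ksep, ((f g : Ksep)) = g ((ζ : Ksep)) / (ζ : Ksep) := Iff.rfl

/-- The cocycle `g ↦ g(α)/α`. -/
noncomputable def cocFun (K : Type*) [Field K] [Algebra K Ksep] (α : Ksepˣ) :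
    (Ksep ≃ₐ[K] Ksep) → Ksepˣ := fun g => (g • α) / α

theorem cocFun_val (α : Ksepˣ) (g : Ksep ≃ₐ[K] Ksep) :
    (cocFun K α g : Ksep) = g (α : Ksep) / (α : Ksep) := by
  simp only [cocFun, AlgEquiv.smul_units_def, Units.val_div_eq_div_val, Units.coe_map,
    MonoidHom.coe_coe]

theorem cocFun_mem (α : Ksepˣ) (hint : IsIntegral K (α : Ksep))
    (hα : ∀ g : Ksep ≃ₐ[K] Ksep, g ((α : Ksep) ^ n) = (α : Ksep) ^ n) :
    cocFun K α ∈ kummerCocycles K Ksep n := by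
  rw [mem_kummerCocycles]
  refine ⟨fun g => ?_, fun g h => ?_, ?_⟩
  · ext
    rw [Units.val_pow_eq_pow_val, cocFun_val, div_pow, ← map_pow, hα, Units.val_one,
      div_self (pow_ne_zero _ α.ne_zero)]
  · simp only [cocFun_val, map_div₀, AlgEquiv.mul_apply]
    rw [div_mul_div_comm, mul_comm ((g : Ksep ≃ₐ[K] Ksep) (α : Ksep)), ← div_mul_div_comm,
      div_self (by simpa using α.ne_zero), mul_one]
  · rw [IsLocallyConstant.iff_exists_open]
    intro g
    haveI : FiniteDimensional K K⟮(α : Ksep)⟯ := adjoin.finiteDimensional hint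
    refine ⟨(fun x => g⁻¹ * x) ⁻¹' (K⟮(α : Ksep)⟯.fixingSubgroup : Set (Ksep ≃ₐ[K] Ksep)),
      (K⟮(α : Ksep)⟯.fixingSubgroup_isOpen).preimage (continuous_mul_left g⁻¹), by
        simpa using (K⟮(α : Ksep)⟯.fixingSubgroup).one_mem, fun g' hg' => ?_⟩
    have hfix : (g⁻¹ * g') (α : Ksep) = (α : Ksep) := by
      exact hg' ⟨(α : Ksep), mem_adjoin_simple_self K (α : Ksep)⟩
    have : g' (α : Ksep) = g (α : Ksep) := by
      have := congrArg g hfix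
      rwa [← AlgEquiv.mul_apply, ← mul_assoc, mul_inv_cancel, one_mul] at this
    ext
    rw [cocFun_val, cocFun_val, this]

theorem cocFun_div_mem (α β : Ksepˣ) (h : (α : Ksep) ^ n = (β : Ksep) ^ n) :
    cocFun K α / cocFun K β ∈ kummerCoboundaries K Ksep n := by
  rw [mem_kummerCoboundaries]
  refine ⟨α / β, by ext; push_cast; rw [div_pow, h, div_self (pow_ne_zero _ β.ne_zero)],
    fun g => ?_⟩
  have hβ : (g : Ksep ≃ₐ[K] Ksep) (β : Ksep) ≠ 0 := by simpa using β.ne_zero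
  push_cast [Pi.div_apply, cocFun_val, map_div₀]
  field_simp

end KummerAux

section FixedPoint

open IntermediateField

variable {K Ksep : Type*} [Field K] [Field Ksep] [Algebra K Ksep]

-- fixed point lemma
theorem fixed_mem_range_algebraMap [IsGalois K Ksep] (x : Ksep)
    (hx : ∀ g : Ksep ≃ₐ[K] Ksep, g x = x) : ∃ k : K, algebraMap K Ksep k = x := by
  have hint : IsIntegral K x := Algebra.IsIntegral.isIntegral x
  haveI : FiniteDimensional K K⟮x⟯ := adjoin.finiteDimensional hint
  set L : IntermediateField K Ksep := normalClosure K K⟮x⟯ Ksep with hL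
  haveI : FiniteDimensional K L := normalClosure.is_finiteDimensional K K⟮x⟯ Ksep
  haveI : Normal K L := normalClosure.normal K K⟮x⟯ Ksep
  haveI : Algebra.IsSeparable K L := Algebra.isSeparable_tower_bot_of_isSeparable K L Ksep
  haveI : IsGalois K L := ⟨⟩
  have hxL : x ∈ L := le_normalClosure K⟮x⟯ (mem_adjoin_simple_self K x)
  have hfix : (⟨x, hxL⟩ : L) ∈ IntermediateField.fixedField (⊤ : Subgroup (L ≃ₐ[K] L)) := by
    rintro ⟨σ, -⟩
    obtain ⟨g, rfl⟩ := AlgEquiv.restrictNormalHom_surjective Ksep σ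
    have := AlgEquiv.restrictNormalHom_apply L g ⟨x, hxL⟩
    change AlgEquiv.restrictNormalHom L g ⟨x, hxL⟩ = _
    ext
    rw [this, hx g]
  rw [← IntermediateField.fixingSubgroup_bot (F := K) (E := L), IsGalois.fixedField_fixingSubgroup] at hfix
  obtain ⟨k, hk⟩ := IntermediateField.mem_bot.mp hfix
  exact ⟨k, by rw [IsScalarTower.algebraMap_apply K L Ksep, hk]; rfl⟩

end FixedPoint

section KummerSurj

open IntermediateField

variable {K Ksep : Type*} [Field K] [Field Ksep] [Algebra K Ksep] {n : ℕ}

set_option synthInstance.maxHeartbeats 1000000 in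
set_option maxHeartbeats 1000000 in
theorem exists_rep_of_mem_kummerCocycles [IsSepClosure K Ksep] (hn : 0 < n)
    (f : (Ksep ≃ₐ[K] Ksep) → Ksepˣ) (hf : f ∈ kummerCocycles K Ksep n) :
    ∃ β : Ksepˣ, ∀ g : Ksep ≃ₐ[K] Ksep, (f g : Ksep) = g (β : Ksep) / (β : Ksep) := by
  obtain ⟨hpow, hcoc, hlc⟩ := (mem_kummerCocycles f).mp hf
  have hf1 : f 1 = 1 := by
    have h0 := hcoc 1 1
    rw [mul_one, AlgEquiv.one_apply] at h0
    have h1 : (f 1 : Ksep) * 1 = (f 1 : Ksep) * (f 1 : Ksep) := by rw [mul_one]; exact h0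
    exact Units.ext (mul_left_cancel₀ (f 1).ne_zero h1).symm
  have hnhds : f ⁻¹' {1} ∈ nhds (1 : Ksep ≃ₐ[K] Ksep) :=
    (hlc {1}).mem_nhds (by simp [hf1])
  obtain ⟨E, hfinE, hE⟩ := (krullTopology_mem_nhds_one_iff K Ksep _).mp hnhds
  haveI := hfinE
  -- the field generated by all n-th roots of unity is finite over K
  have hroots : {x : Ksep | x ^ n = 1}.Finite := by
    refine (Polynomial.finite_setOf_isRoot (Polynomial.X_pow_sub_C_ne_zero hn (1 : Ksep))).subset
      fun x hx => ?_
    simp only [Set.mem_setOf_eq, Polynomial.IsRoot, Polynomial.eval_sub, Polynomial.eval_pow,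
      Polynomial.eval_X, Polynomial.eval_C, sub_eq_zero]
    exact hx
  haveI := hroots.to_subtype
  set E' := IntermediateField.adjoin K {x : Ksep | x ^ n = 1} with hE'
  haveI : FiniteDimensional K E' :=
    IntermediateField.finiteDimensional_adjoin fun x _ => Algebra.IsIntegral.isIntegral x
  set E₂ := E ⊔ E' with hE₂
  haveI : FiniteDimensional K E₂ := IntermediateField.finiteDimensional_sup E E'
  set L : IntermediateField K Ksep := normalClosure K E₂ Ksep with hLdef
  haveI hfinL : FiniteDimensional K L := inferInstance
  haveI hnorL : Normal K L := inferInstance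
  have hE₂L : E₂ ≤ L := le_normalClosure E₂
  have hEL : E ≤ L := le_trans le_sup_left hE₂L
  have hvals : ∀ g : Ksep ≃ₐ[K] Ksep, (f g : Ksep) ∈ L := fun g =>
    hE₂L ((le_sup_right : E' ≤ E₂) (subset_adjoin K _ (by
      show (f g : Ksep) ^ n = 1
      rw [← Units.val_pow_eq_pow_val, hpow g, Units.val_one])))
  clear_value L
  clear hLdef
  have hLfix : ∀ h ∈ L.fixingSubgroup, f h = 1 := fun h hh =>
    hE (IntermediateField.fixingSubgroup_antitone hEL hh)
  have hfactor : ∀ g g' : Ksep ≃ₐ[K] Ksep,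
      AlgEquiv.restrictNormalHom L g = AlgEquiv.restrictNormalHom L g' → f g = f g' := by
    intro g g' hgg'
    have hmem : g⁻¹ * g' ∈ L.fixingSubgroup := by
      rw [IntermediateField.mem_fixingSubgroup_iff]
      intro x hx
      have h1 := AlgEquiv.restrictNormalHom_apply L g (⟨x, hx⟩ : L)
      have h2 := AlgEquiv.restrictNormalHom_apply L g' (⟨x, hx⟩ : L)
      rw [hgg'] at h1
      have hxx : g' x = g x := h2.symm.trans h1
      show (g⁻¹ * g') x = x
      rw [AlgEquiv.mul_apply, hxx, ← AlgEquiv.mul_apply, inv_mul_cancel, AlgEquiv.one_apply]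
    have hc := hcoc g (g⁻¹ * g')
    rw [← mul_assoc, mul_inv_cancel, one_mul, hLfix _ hmem] at hc
    exact Units.ext (by rw [hc, Units.val_one, map_one, mul_one])
  have hsurj : Function.Surjective (AlgEquiv.restrictNormalHom (F := K) (K₁ := Ksep) L) :=
    AlgEquiv.restrictNormalHom_surjective Ksep
  set ρ : (Ksep ≃ₐ[K] Ksep) →* (L ≃ₐ[K] L) := AlgEquiv.restrictNormalHom L with hρ
  set F1 : (L ≃ₐ[K] L) → Lˣ := fun σ =>
    Units.mk0 (⟨(f (Function.surjInv hsurj σ) : Ksep), hvals _⟩ : L)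
      (fun hz => (f (Function.surjInv hsurj σ)).ne_zero
        (by simpa using congrArg Subtype.val hz)) with hF1
  have hF1coe : ∀ g : Ksep ≃ₐ[K] Ksep, ((F1 (ρ g) : L) : Ksep) = (f g : Ksep) := by
    intro g
    have h1 : ρ (Function.surjInv hsurj (ρ g)) = ρ g := Function.surjInv_eq hsurj (ρ g)
    have h2 := hfactor _ _ h1
    simp only [hF1, Units.val_mk0, h2]
  have hcocF1 : groupCohomology.IsMulCocycle₁ F1 := by
    intro σ τ
    obtain ⟨g, rfl⟩ := hsurj σ
    obtain ⟨g', rfl⟩ := hsurj τ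
    refine Units.ext (Subtype.ext ?_)
    have : ρ g * ρ g' = ρ (g * g') := (map_mul ρ g g').symm
    rw [this]
    push_cast
    rw [hF1coe (g * g'), AlgEquiv.smul_units_def]
    simp only [Units.coe_map, MonoidHom.coe_coe]
    show (f (g * g') : Ksep) = ((AlgEquiv.restrictNormalHom L g (F1 (ρ g') : L) : L) : Ksep)
      * ((F1 (ρ g) : L) : Ksep)
    rw [AlgEquiv.restrictNormalHom_apply, hF1coe g', hF1coe g, hcoc g g', mul_comm]
  obtain ⟨β, hβ⟩ :=
    groupCohomology.isMulCoboundary₁_of_isMulCocycle₁_of_aut_to_units F1 hcocF1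
  refine ⟨Units.map (algebraMap L Ksep).toMonoidHom β, fun g => ?_⟩
  have h1 := hβ (ρ g)
  have h2 : (((ρ g • β / β : Lˣ) : L) : Ksep) = ((F1 (ρ g) : L) : Ksep) := by rw [h1]
  rw [hF1coe g] at h2
  rw [← h2]
  push_cast
  show (((ρ g) (β : L) / (β : L) : L) : Ksep) = _
  rw [hρ]
  rw [show ((((AlgEquiv.restrictNormalHom (F := K) (K₁ := Ksep) L) g) (β : L) / (β : L) : L) : Ksep)
      = (((AlgEquiv.restrictNormalHom (F := K) (K₁ := Ksep) L) g (β : L) : L) : Ksep)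
        / ((β : L) : Ksep) from rfl,
    AlgEquiv.restrictNormalHom_apply]
  simp only [Units.coe_map, MonoidHom.coe_coe, IntermediateField.algebraMap_apply]
  rfl

end KummerSurj

/-- Kummer theory: for `n` invertible in `K`, the Kummer sequence induces an
isomorphism `K^×/(K^×)ⁿ ≃ H¹(Gal(K_sep/K), μ_n)`, sending the class of
`a ∈ K^×` to the class of the cocycle `g ↦ g(α)/α`, where `αⁿ = a`. -/
theorem kummer_isomorphism [IsSepClosure K Ksep] (hn : 0 < n) (hinv : (n : K) ≠ 0) :
    ∃ e : (Kˣ ⧸ (powMonoidHom n : Kˣ →* Kˣ).range) ≃* kummerH1 K Ksep n,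
      ∀ (a : Kˣ) (α : Ksepˣ), (α : Ksep) ^ n = algebraMap K Ksep (a : K) →
        ∀ f : kummerCocycles K Ksep n,
          (∀ g : Ksep ≃ₐ[K] Ksep,
            ((f : (Ksep ≃ₐ[K] Ksep) → Ksepˣ) g : Ksep) = g ((α : Ksep)) / (α : Ksep)) →
          e (QuotientGroup.mk a) = QuotientGroup.mk f := by
  classical
  haveI : IsSepClosed Ksep := IsSepClosure.sep_closed K
  -- existence of n-th roots in Ksep
  have hcastK : (n : Ksep) ≠ 0 := by
    have h1 : algebraMap K Ksep (n : K) ≠ 0 := fun h =>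
      hinv ((algebraMap K Ksep).injective (by rw [h, map_zero]))
    rwa [map_natCast] at h1
  have hroot : ∀ a : Kˣ, ∃ α : Ksepˣ, (α : Ksep) ^ n = algebraMap K Ksep (a : K) := by
    intro a
    have hne : algebraMap K Ksep (a : K) ≠ 0 := by
      simpa using fun h => a.ne_zero ((algebraMap K Ksep).injective (by rw [h, map_zero]))
    obtain ⟨x, hx⟩ := IsSepClosed.exists_root
      (Polynomial.X ^ n - Polynomial.C (algebraMap K Ksep (a : K)))
      (by rw [Polynomial.degree_X_pow_sub_C hn]; exact_mod_cast hn.ne')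
      (Polynomial.separable_X_pow_sub_C _ hcastK hne)
    have hxn : x ^ n = algebraMap K Ksep (a : K) := by
      have h2 := hx
      simp only [Polynomial.IsRoot, Polynomial.eval_sub, Polynomial.eval_pow, Polynomial.eval_X,
        Polynomial.eval_C, sub_eq_zero] at h2
      exact h2
    have hx0 : x ≠ 0 := fun h => hne (by rw [← hxn, h, zero_pow hn.ne'])
    exact ⟨Units.mk0 x hx0, hxn⟩
  choose rt hrt using hroot
  have hint : ∀ α : Ksepˣ, IsIntegral K (α : Ksep) := fun α => Algebra.IsIntegral.isIntegral _
  have hfixa : ∀ a : Kˣ, ∀ g : Ksep ≃ₐ[K] Ksep, g ((rt a : Ksep) ^ n) = (rt a : Ksep) ^ n := by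
    intro a g; rw [hrt a, AlgEquiv.commutes]
  set c : Kˣ → kummerCocycles K Ksep n :=
    fun a => ⟨cocFun K (rt a), cocFun_mem _ (hint _) (hfixa a)⟩ with hc
  -- equality of classes from coboundary divisibility
  have hmkeq : ∀ x y : kummerCocycles K Ksep n,
      ((x : (Ksep ≃ₐ[K] Ksep) → Ksepˣ) / y) ∈ kummerCoboundaries K Ksep n →
      (QuotientGroup.mk x : kummerH1 K Ksep n) = QuotientGroup.mk y := by
    intro x y hxy
    refine (QuotientGroup.eq).mpr ?_
    rw [Subgroup.mem_subgroupOf]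
    have h1 : ((x⁻¹ * y : kummerCocycles K Ksep n) : (Ksep ≃ₐ[K] Ksep) → Ksepˣ)
        = ((x : (Ksep ≃ₐ[K] Ksep) → Ksepˣ) / y)⁻¹ := by
      push_cast
      funext g
      simp [mul_comm, div_eq_mul_inv]
    rw [h1]
    exact inv_mem hxy
  have hmul : ∀ a b : Kˣ, (QuotientGroup.mk (c (a * b)) : kummerH1 K Ksep n)
      = QuotientGroup.mk (c a) * QuotientGroup.mk (c b) := by
    intro a b
    have hcoc : cocFun K (rt a * rt b) = cocFun K (rt a) * cocFun K (rt b) := by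
      funext g
      show (g • (rt a * rt b)) / (rt a * rt b) = ((g • rt a) / rt a) * ((g • rt b) / rt b)
      rw [smul_mul', div_mul_div_comm]
    have h1 : (QuotientGroup.mk (c (a * b)) : kummerH1 K Ksep n)
        = QuotientGroup.mk (c a * c b) := by
      apply hmkeq
      have h2 : ((c (a * b) : (Ksep ≃ₐ[K] Ksep) → Ksepˣ)
          / ((c a * c b : kummerCocycles K Ksep n) : (Ksep ≃ₐ[K] Ksep) → Ksepˣ))
          = cocFun K (rt (a * b)) / cocFun K (rt a * rt b) := by
        rw [hcoc]; rfl
      rw [h2]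
      refine cocFun_div_mem _ _ ?_
      push_cast
      rw [mul_pow, hrt, hrt, hrt, ← map_mul]
      push_cast
      rfl
    rw [h1]
    rfl
  set Φ : Kˣ →* kummerH1 K Ksep n :=
    MonoidHom.mk' (fun a => QuotientGroup.mk (c a)) hmul with hΦ
  have hΦapp : ∀ a : Kˣ, Φ a = QuotientGroup.mk (c a) := fun a => rfl
  -- surjectivity
  have hsurjΦ : Function.Surjective Φ := by
    intro q
    obtain ⟨x, rfl⟩ := QuotientGroup.mk_surjective q
    obtain ⟨β, hβ⟩ := exists_rep_of_mem_kummerCocycles hn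
      (x : (Ksep ≃ₐ[K] Ksep) → Ksepˣ) x.2
    have hgβ : ∀ g : Ksep ≃ₐ[K] Ksep, g (β : Ksep)
        = ((x : (Ksep ≃ₐ[K] Ksep) → Ksepˣ) g : Ksep) * (β : Ksep) := by
      intro g
      rw [hβ g, div_mul_cancel₀]
      exact β.ne_zero
    have hfixβ : ∀ g : Ksep ≃ₐ[K] Ksep, g ((β : Ksep) ^ n) = (β : Ksep) ^ n := by
      intro g
      have hx1 : ((x : (Ksep ≃ₐ[K] Ksep) → Ksepˣ) g) ^ n = 1 :=
        ((mem_kummerCocycles _).mp x.2).1 g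
      have hx1' : ((x : (Ksep ≃ₐ[K] Ksep) → Ksepˣ) g : Ksep) ^ n = 1 := by
        rw [← Units.val_pow_eq_pow_val, hx1, Units.val_one]
      rw [map_pow, hgβ g, mul_pow, hx1', one_mul]
    obtain ⟨a₀, ha₀⟩ := fixed_mem_range_algebraMap ((β : Ksep) ^ n) hfixβ
    have ha₀0 : a₀ ≠ 0 := fun h =>
      pow_ne_zero n β.ne_zero (by rw [← ha₀, h, map_zero])
    refine ⟨Units.mk0 a₀ ha₀0, ?_⟩
    rw [hΦapp]
    apply hmkeq
    have hxf : ((x : (Ksep ≃ₐ[K] Ksep) → Ksepˣ)) = cocFun K β :=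
      funext fun g => Units.ext (by rw [hβ g, cocFun_val])
    have h3 : ((c (Units.mk0 a₀ ha₀0) : (Ksep ≃ₐ[K] Ksep) → Ksepˣ)) = cocFun K (rt _) := rfl
    rw [h3, hxf]
    exact cocFun_div_mem _ _ (by rw [hrt]; exact ha₀)
  -- kernel
  have hker : Φ.ker = (powMonoidHom n : Kˣ →* Kˣ).range := by
    ext a
    constructor
    · intro ha
      rw [MonoidHom.mem_ker, hΦapp] at ha
      have h1 : c a ∈ (kummerCoboundaries K Ksep n).subgroupOf (kummerCocycles K Ksep n) :=
        (QuotientGroup.eq_one_iff _).mp ha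
      rw [Subgroup.mem_subgroupOf] at h1
      obtain ⟨ζ, hζn, hζ⟩ := (mem_kummerCoboundaries _).mp h1
      have hζn' : (ζ : Ksep) ^ n = 1 := by
        rw [← Units.val_pow_eq_pow_val, hζn, Units.val_one]
      have hfixq : ∀ g : Ksep ≃ₐ[K] Ksep,
          g ((rt a : Ksep) / (ζ : Ksep)) = (rt a : Ksep) / (ζ : Ksep) := by
        intro g
        have h2 := hζ g
        rw [show ((c a : (Ksep ≃ₐ[K] Ksep) → Ksepˣ) g : Ksep)
          = g ((rt a : Ksep)) / (rt a : Ksep) from cocFun_val _ g] at h2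
        have hgζ : g (ζ : Ksep) ≠ 0 := by
          simpa using ζ.ne_zero
        rw [map_div₀]
        field_simp at h2 ⊢
        linear_combination h2
      obtain ⟨b₀, hb₀⟩ := fixed_mem_range_algebraMap _ hfixq
      have hb0 : b₀ ≠ 0 := fun h =>
        div_ne_zero (rt a).ne_zero ζ.ne_zero (by rw [← hb₀, h, map_zero])
      refine ⟨Units.mk0 b₀ hb0, Units.ext ?_⟩
      apply (algebraMap K Ksep).injective
      show algebraMap K Ksep (((powMonoidHom n) (Units.mk0 b₀ hb0) : Kˣ) : K)
        = algebraMap K Ksep (a : K)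
      rw [powMonoidHom_apply, Units.val_pow_eq_pow_val]
      rw [show ((Units.mk0 b₀ hb0 : Kˣ) : K) = b₀ from rfl]
      rw [map_pow, hb₀, div_pow, hrt a, hζn', div_one]
    · rintro ⟨b, rfl⟩
      rw [MonoidHom.mem_ker, hΦapp]
      apply (QuotientGroup.eq_one_iff _).mpr
      rw [Subgroup.mem_subgroupOf]
      set αb : Ksepˣ := Units.map (algebraMap K Ksep).toMonoidHom b with hαb
      have h2 : cocFun K αb = 1 := by
        funext g
        ext
        rw [cocFun_val]
        show g ((αb : Ksep)) / (αb : Ksep) = ((1 : Ksepˣ) : Ksep)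
        rw [show (αb : Ksep) = algebraMap K Ksep (b : K) from rfl, AlgEquiv.commutes,
          div_self (by simpa using b.ne_zero), Units.val_one]
      have h3 : ((c (powMonoidHom n b) : (Ksep ≃ₐ[K] Ksep) → Ksepˣ))
          = cocFun K (rt (powMonoidHom n b)) / cocFun K αb := by
        rw [h2, div_one]
      rw [h3]
      refine cocFun_div_mem _ _ ?_
      rw [hrt]
      show algebraMap K Ksep (((powMonoidHom n) b : Kˣ) : K)
        = (algebraMap K Ksep ((b : Kˣ) : K)) ^ n
      rw [powMonoidHom_apply, Units.val_pow_eq_pow_val, map_pow]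
  -- assemble the equivalence
  refine ⟨(QuotientGroup.quotientMulEquivOfEq hker.symm).trans
    (QuotientGroup.quotientKerEquivOfSurjective Φ hsurjΦ), ?_⟩
  intro a α hα f hf
  have he : ((QuotientGroup.quotientMulEquivOfEq hker.symm).trans
      (QuotientGroup.quotientKerEquivOfSurjective Φ hsurjΦ)) (QuotientGroup.mk a) = Φ a := rfl
  rw [he, hΦapp]
  apply hmkeq
  have hfc : ((f : (Ksep ≃ₐ[K] Ksep) → Ksepˣ)) = cocFun K α :=
    funext fun g => Units.ext (by rw [hf g, cocFun_val])
  rw [show ((c a : (Ksep ≃ₐ[K] Ksep) → Ksepˣ)) = cocFun K (rt a) from rfl, hfc]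
  exact cocFun_div_mem _ _ (by rw [hrt a, hα])
end
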